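/- If L is β-smooth, then the SAM one-step perturbation δ* = ρ·∇L(θ)/‖∇L(θ)‖ is near-optimal for the inner maximization: max_{‖δ‖₂ ≤ ρ} L(θ + δ) − L(θ + δ*) ≤ β·ρ². -/

import Mathlib

open scoped Gradient RealInnerProductSpace
open Set

/-!
Along a segment, the remainder `r t = f (x + t • v) - f x - t * ⟪∇ f x, v⟫` has derivative
`⟪∇ f (x + t • v) - ∇ f x, v⟫`, of size at most `β t ‖v‖²`; comparing with `β t² ‖v‖² / 2` gives
`|r 1| ≤ β ‖v‖² / 2` (the descent lemma). Hence on the `ρ`-ball `f (x + δ)` is within `β ρ² / 2` of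
its linearisation `f x + ⟪∇ f x, δ⟫`, whose maximum `f x + ρ ‖∇ f x‖` is attained at `δ*`. Both the
maximum of `f (x + δ)` and `f (x + δ*)` are therefore within `β ρ² / 2` of `f x + ρ ‖∇ f x‖`.
-/

lemma nonneg_of_norm_sub_le_mul_norm_sub {E F : Type*} [NormedAddCommGroup E] [Nontrivial E]
    [NormedAddCommGroup F] {g : E → F} {β : ℝ} (h : ∀ x y, ‖g x - g y‖ ≤ β * ‖x - y‖) : 0 ≤ β := by
  obtain ⟨v, hv⟩ := exists_ne (0 : E)
  have hv0 : 0 ≤ β * ‖v‖ := by simpa using (norm_nonneg _).trans (h v 0)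
  exact nonneg_of_mul_nonneg_left hv0 (norm_pos_iff.2 hv)

section Smooth

variable {E : Type*} [NormedAddCommGroup E] [InnerProductSpace ℝ E] [CompleteSpace E]

lemma hasDerivAt_comp_add_smul {f : E → ℝ} (hf : Differentiable ℝ f) (x v : E) (t : ℝ) :
    HasDerivAt (fun t : ℝ => f (x + t • v)) ⟪∇ f (x + t • v), v⟫ t := by
  have hline : HasDerivAt (fun t : ℝ => x + t • v) v t := by
    simpa using ((hasDerivAt_id t).smul_const v).const_add x
  exact (hf _).hasGradientAt.hasFDerivAt.comp_hasDerivAt t hline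

theorem abs_sub_sub_inner_gradient_le {f : E → ℝ} {β : ℝ} (hf : Differentiable ℝ f)
    (hβ : ∀ x y, ‖∇ f x - ∇ f y‖ ≤ β * ‖x - y‖) (x v : E) :
    |f (x + v) - f x - ⟪∇ f x, v⟫| ≤ β / 2 * ‖v‖ ^ 2 := by
  have hderiv (t : ℝ) : HasDerivAt (fun t : ℝ => f (x + t • v) - f x - t * ⟪∇ f x, v⟫)
      (⟪∇ f (x + t • v), v⟫ - ⟪∇ f x, v⟫) t :=
    ((hasDerivAt_comp_add_smul hf x v t).sub_const (f x)).sub (hasDerivAt_mul_const _)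
  have hbound (t : ℝ) (ht : t ∈ Ico (0 : ℝ) 1) :
      ‖⟪∇ f (x + t • v), v⟫ - ⟪∇ f x, v⟫‖ ≤ β * ‖v‖ ^ 2 * t := by
    calc ‖⟪∇ f (x + t • v), v⟫ - ⟪∇ f x, v⟫‖
        = |⟪∇ f (x + t • v) - ∇ f x, v⟫| := by rw [inner_sub_left, Real.norm_eq_abs]
      _ ≤ ‖∇ f (x + t • v) - ∇ f x‖ * ‖v‖ := abs_real_inner_le_norm _ _
      _ ≤ β * ‖(x + t • v) - x‖ * ‖v‖ := by gcongr; exact hβ _ _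
      _ = β * ‖v‖ ^ 2 * t := by
        rw [add_sub_cancel_left, norm_smul, Real.norm_of_nonneg ht.1]
        ring
  have hB (t : ℝ) : HasDerivAt (fun t : ℝ => β * ‖v‖ ^ 2 / 2 * t ^ 2) (β * ‖v‖ ^ 2 * t) t :=
    ((hasDerivAt_pow 2 t).const_mul _).congr_deriv (by ring)
  have key := image_norm_le_of_norm_deriv_right_le_deriv_boundary
    (fun t _ => (hderiv t).continuousAt.continuousWithinAt)
    (fun t _ => (hderiv t).hasDerivWithinAt) (by simp) hB hbound (right_mem_Icc.2 zero_le_one)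
  simpa [Real.norm_eq_abs, div_mul_eq_mul_div, mul_right_comm] using key

/-- The SAM perturbation `δ*`, the maximiser of the linearisation of `f` over the `ρ`-ball. -/
noncomputable def samPerturbation (f : E → ℝ) (ρ : ℝ) (x : E) : E :=
  (ρ / ‖∇ f x‖) • ∇ f x

lemma inner_gradient_samPerturbation (f : E → ℝ) (ρ : ℝ) (x : E) :
    ⟪∇ f x, samPerturbation f ρ x⟫ = ρ * ‖∇ f x‖ := by
  rw [samPerturbation, real_inner_smul_right, real_inner_self_eq_norm_sq]
  rcases eq_or_ne ‖∇ f x‖ 0 with h | h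
  · simp [h]
  · field_simp

lemma norm_samPerturbation {f : E → ℝ} (ρ : ℝ) {x : E} (hx : ∇ f x ≠ 0) :
    ‖samPerturbation f ρ x‖ = |ρ| := by
  rw [samPerturbation, norm_smul, norm_div, norm_norm, div_mul_cancel₀ _ (norm_ne_zero_iff.2 hx),
    Real.norm_eq_abs]

lemma add_mul_norm_gradient_sub_le_apply_add_samPerturbation {f : E → ℝ} {β : ℝ}
    (hf : Differentiable ℝ f) (hβ : ∀ x y, ‖∇ f x - ∇ f y‖ ≤ β * ‖x - y‖) (ρ : ℝ) {x : E}
    (hx : ∇ f x ≠ 0) :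
    f x + ρ * ‖∇ f x‖ - β / 2 * ρ ^ 2 ≤ f (x + samPerturbation f ρ x) := by
  have h := abs_le.1 (abs_sub_sub_inner_gradient_le hf hβ x (samPerturbation f ρ x))
  rw [inner_gradient_samPerturbation, norm_samPerturbation ρ hx, sq_abs] at h
  linarith [h.1]

lemma apply_add_le_add_mul_norm_gradient_add {f : E → ℝ} {β : ℝ} (hf : Differentiable ℝ f)
    (hβ : ∀ x y, ‖∇ f x - ∇ f y‖ ≤ β * ‖x - y‖) (hβ0 : 0 ≤ β) {ρ : ℝ} (x : E) {δ : E}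
    (hδ : ‖δ‖ ≤ ρ) :
    f (x + δ) ≤ f x + ρ * ‖∇ f x‖ + β / 2 * ρ ^ 2 := by
  have h := (abs_le.1 (abs_sub_sub_inner_gradient_le hf hβ x δ)).2
  have hlin : ⟪∇ f x, δ⟫ ≤ ρ * ‖∇ f x‖ :=
    (real_inner_le_norm _ _).trans (by rw [mul_comm]; gcongr)
  have hquad : β / 2 * ‖δ‖ ^ 2 ≤ β / 2 * ρ ^ 2 := by gcongr
  linarith

lemma iSup_closedBall_apply_add_le {f : E → ℝ} {β : ℝ} (hf : Differentiable ℝ f)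
    (hβ : ∀ x y, ‖∇ f x - ∇ f y‖ ≤ β * ‖x - y‖) (hβ0 : 0 ≤ β) {ρ : ℝ} (hρ : 0 ≤ ρ) (x : E) :
    ⨆ δ : Metric.closedBall (0 : E) ρ, f (x + δ) ≤ f x + ρ * ‖∇ f x‖ + β / 2 * ρ ^ 2 := by
  have : Nonempty (Metric.closedBall (0 : E) ρ) := ⟨⟨0, Metric.mem_closedBall_self hρ⟩⟩
  exact ciSup_le fun ⟨δ, hδ⟩ ↦
    apply_add_le_add_mul_norm_gradient_add hf hβ hβ0 x (mem_closedBall_zero_iff.1 hδ)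

end Smooth

/-- If `L` is `β`-smooth, the SAM one-step perturbation `δ* = (ρ/‖∇L(θ)‖) • ∇L(θ)` is
near-optimal for the inner maximization:
`max_{‖δ‖ ≤ ρ} L(θ + δ) − L(θ + δ*) ≤ β ρ²`. -/
theorem sam_one_step_near_optimal (n : ℕ) (L : EuclideanSpace ℝ (Fin n) → ℝ) (β : ℝ)
    (hdiff : Differentiable ℝ L)
    (hsmooth : ∀ x y : EuclideanSpace ℝ (Fin n), ‖∇ L x - ∇ L y‖ ≤ β * ‖x - y‖)
    (θ : EuclideanSpace ℝ (Fin n)) (hgrad : ∇ L θ ≠ 0) (ρ : ℝ) (hρ : 0 < ρ) :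
    (⨆ δ : Metric.closedBall (0 : EuclideanSpace ℝ (Fin n)) ρ, L (θ + δ)) -
      L (θ + (ρ / ‖∇ L θ‖) • ∇ L θ) ≤ β * ρ ^ 2 := by
  have : Nontrivial (EuclideanSpace ℝ (Fin n)) := nontrivial_of_ne _ _ hgrad
  have hβ : 0 ≤ β := nonneg_of_norm_sub_le_mul_norm_sub hsmooth
  have hmax := iSup_closedBall_apply_add_le hdiff hsmooth hβ hρ.le θ
  have hsam : L θ + ρ * ‖∇ L θ‖ - β / 2 * ρ ^ 2 ≤ L (θ + (ρ / ‖∇ L θ‖) • ∇ L θ) :=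
    add_mul_norm_gradient_sub_le_apply_add_samPerturbation hdiff hsmooth ρ hgrad
  linarith
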